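/- arXiv:2105.05314 — 3 statements merged into one kernel-verified Lean document; each statement's English description precedes it below -/
import Mathlib

section
/- Let ρ ∈ (-1,1) and fix γ₁, γ₂ ∈ ℝ. Define η(ψ) = (1−ρ²)/[√({ψ(1−ρ²)+γ₁²−2ργ₁γ₂+γ₂²}(m₁(ψ)²−2ρm₁(ψ)m₂(ψ)+m₂(ψ)²)) − m₁(ψ)(γ₁−ργ₂) − m₂(ψ)(γ₂−ργ₁)] with mᵢ(ψ) = (γᵢ + √(ψ+γᵢ²))/ψ. Then η(ψ) → √((1+ρ)/2) as ψ → ∞. -/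
/-!
Put `sᵢ(ψ) = √ψ · mᵢ(ψ) = (γᵢ + √(ψ + γᵢ²)) / √ψ`, which tends to `1`. The quadratic form
`m₁² − 2ρ m₁ m₂ + m₂²` is homogeneous of degree two, so the radicand equals
`(1 − ρ² + O(1/ψ)) · (s₁² − 2ρ s₁ s₂ + s₂²) → (1 − ρ²)(2 − 2ρ)`, while the linear terms
`mᵢ = sᵢ / √ψ` vanish. The denominator therefore tends to `(1 − ρ)√(2(1 + ρ))`.
-/

open Filter Topology

theorem tendsto_const_add_div_atTop (a b : ℝ) :
    Tendsto (fun ψ : ℝ => a + b / ψ) atTop (𝓝 a) := by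
  simpa using tendsto_const_nhds.add (tendsto_const_nhds.div_atTop (tendsto_id (α := ℝ)))

theorem tendsto_sqrt_mul_add_sqrt_add_sq_div (γ : ℝ) :
    Tendsto (fun ψ : ℝ => √ψ * ((γ + √(ψ + γ ^ 2)) / ψ)) atTop (𝓝 1) := by
  have hγ : Tendsto (fun ψ : ℝ => γ / √ψ) atTop (𝓝 0) :=
    tendsto_const_nhds.div_atTop Real.tendsto_sqrt_atTop
  have hroot : Tendsto (fun ψ : ℝ => √(1 + γ ^ 2 / ψ)) atTop (𝓝 1) := by
    simpa using (tendsto_const_add_div_atTop 1 (γ ^ 2)).sqrt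
  have hsum : Tendsto (fun ψ : ℝ => γ / √ψ + √(1 + γ ^ 2 / ψ)) atTop (𝓝 1) := by
    simpa using hγ.add hroot
  refine hsum.congr' ?_
  filter_upwards [eventually_gt_atTop 0] with ψ hψ
  rw [show 1 + γ ^ 2 / ψ = (ψ + γ ^ 2) / ψ by field_simp, Real.sqrt_div (by positivity)]
  field_simp
  rw [Real.sq_sqrt hψ.le]

theorem tendsto_zero_of_tendsto_sqrt_mul {m : ℝ → ℝ} {L : ℝ}
    (h : Tendsto (fun ψ => √ψ * m ψ) atTop (𝓝 L)) : Tendsto m atTop (𝓝 0) := by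
  have hdiv : Tendsto (fun ψ => √ψ * m ψ * (√ψ)⁻¹) atTop (𝓝 0) := by
    simpa using h.mul Real.tendsto_sqrt_atTop.inv_tendsto_atTop
  refine hdiv.congr' ?_
  filter_upwards [eventually_gt_atTop 0] with ψ hψ
  field_simp

theorem tendsto_sqrt_mul_quadratic_sub_linear (ρ κ a b : ℝ) {c m₁ m₂ : ℝ → ℝ}
    (hc : Tendsto (fun ψ => c ψ / ψ) atTop (𝓝 κ))
    (h₁ : Tendsto (fun ψ => √ψ * m₁ ψ) atTop (𝓝 1))
    (h₂ : Tendsto (fun ψ => √ψ * m₂ ψ) atTop (𝓝 1)) :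
    Tendsto (fun ψ => √(c ψ * (m₁ ψ ^ 2 - 2 * ρ * m₁ ψ * m₂ ψ + m₂ ψ ^ 2))
        - m₁ ψ * a - m₂ ψ * b) atTop (𝓝 √(κ * (2 - 2 * ρ))) := by
  set s₁ := fun ψ => √ψ * m₁ ψ
  set s₂ := fun ψ => √ψ * m₂ ψ
  have hquad : Tendsto (fun ψ => s₁ ψ ^ 2 - 2 * ρ * s₁ ψ * s₂ ψ + s₂ ψ ^ 2)
      atTop (𝓝 (2 - 2 * ρ)) := by
    convert ((h₁.pow 2).sub ((tendsto_const_nhds.mul h₁).mul h₂)).add (h₂.pow 2) using 2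
    ring
  have hlin : Tendsto (fun ψ => m₁ ψ * a + m₂ ψ * b) atTop (𝓝 0) := by
    simpa using ((tendsto_zero_of_tendsto_sqrt_mul h₁).mul_const a).add
      ((tendsto_zero_of_tendsto_sqrt_mul h₂).mul_const b)
  have hden : Tendsto (fun ψ => √(c ψ / ψ * (s₁ ψ ^ 2 - 2 * ρ * s₁ ψ * s₂ ψ + s₂ ψ ^ 2))
      - (m₁ ψ * a + m₂ ψ * b)) atTop (𝓝 √(κ * (2 - 2 * ρ))) := by
    simpa using (hc.mul hquad).sqrt.sub hlin
  refine hden.congr' ?_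
  filter_upwards [eventually_gt_atTop 0] with ψ hψ
  have homog : c ψ / ψ * (s₁ ψ ^ 2 - 2 * ρ * s₁ ψ * s₂ ψ + s₂ ψ ^ 2)
      = c ψ * (m₁ ψ ^ 2 - 2 * ρ * m₁ ψ * m₂ ψ + m₂ ψ ^ 2) :=
    calc _ = c ψ / ψ * (√ψ ^ 2 * (m₁ ψ ^ 2 - 2 * ρ * m₁ ψ * m₂ ψ + m₂ ψ ^ 2)) := by ring
      _ = _ := by rw [Real.sq_sqrt hψ.le]; field_simp
  rw [homog, sub_sub]

theorem one_sub_sq_div_sqrt_eq_sqrt {ρ : ℝ} (hρ : ρ ∈ Set.Ioo (-1 : ℝ) 1) :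
    (1 - ρ ^ 2) / √((1 - ρ ^ 2) * (2 - 2 * ρ)) = √((1 + ρ) / 2) := by
  obtain ⟨hlo, hhi⟩ := hρ
  have hpos : 0 < 1 - ρ ^ 2 := by nlinarith
  rw [div_eq_iff (Real.sqrt_pos.2 (by nlinarith)).ne', ← Real.sqrt_mul (by linarith),
    show (1 + ρ) / 2 * ((1 - ρ ^ 2) * (2 - 2 * ρ)) = (1 - ρ ^ 2) ^ 2 by ring,
    Real.sqrt_sq hpos.le]

/-- As `ψ → ∞`, the GH residual tail dependence coefficient converges to
`√((1+ρ)/2)`, regardless of the skewness parameters. -/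
theorem gh_eta_tendsto_elliptical (ρ γ₁ γ₂ : ℝ)
    (hρ : ρ ∈ Set.Ioo (-1 : ℝ) 1) :
    Tendsto (fun ψ : ℝ =>
        (1 - ρ ^ 2) /
          (Real.sqrt ((ψ * (1 - ρ ^ 2) + γ₁ ^ 2 - 2 * ρ * γ₁ * γ₂ + γ₂ ^ 2) *
              (((γ₁ + Real.sqrt (ψ + γ₁ ^ 2)) / ψ) ^ 2
                - 2 * ρ * ((γ₁ + Real.sqrt (ψ + γ₁ ^ 2)) / ψ) *
                    ((γ₂ + Real.sqrt (ψ + γ₂ ^ 2)) / ψ)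
                + ((γ₂ + Real.sqrt (ψ + γ₂ ^ 2)) / ψ) ^ 2))
            - ((γ₁ + Real.sqrt (ψ + γ₁ ^ 2)) / ψ) * (γ₁ - ρ * γ₂)
            - ((γ₂ + Real.sqrt (ψ + γ₂ ^ 2)) / ψ) * (γ₂ - ρ * γ₁)))
      atTop (nhds (Real.sqrt ((1 + ρ) / 2))) := by
  have hc : Tendsto (fun ψ : ℝ => (ψ * (1 - ρ ^ 2) + γ₁ ^ 2 - 2 * ρ * γ₁ * γ₂ + γ₂ ^ 2) / ψ)
      atTop (𝓝 (1 - ρ ^ 2)) := by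
    refine (tendsto_const_add_div_atTop _ (γ₁ ^ 2 - 2 * ρ * γ₁ * γ₂ + γ₂ ^ 2)).congr' ?_
    filter_upwards [eventually_ne_atTop 0] with ψ hψ
    field_simp
    ring
  have hden := tendsto_sqrt_mul_quadratic_sub_linear ρ (1 - ρ ^ 2) (γ₁ - ρ * γ₂) (γ₂ - ρ * γ₁)
    hc (tendsto_sqrt_mul_add_sqrt_add_sq_div γ₁) (tendsto_sqrt_mul_add_sqrt_add_sq_div γ₂)
  have hden_pos : 0 < √((1 - ρ ^ 2) * (2 - 2 * ρ)) := by
    obtain ⟨hlo, hhi⟩ := hρ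
    exact Real.sqrt_pos.2 (mul_pos (by nlinarith) (by linarith))
  rw [← one_sub_sq_div_sqrt_eq_sqrt hρ]
  exact tendsto_const_nhds.div hden hden_pos.ne'
end

section
/- Let ψ > 0 and γ₁, γ₂ ∈ ℝ, with mᵢ = (γᵢ + √(ψ+γᵢ²))/ψ. Then with ρ = 0, the formula η = 1/[√((ψ+γ₁²+γ₂²)(m₁²+m₂²)) − m₁γ₁ − m₂γ₂] satisfies 0 < η < 1. -/
/-!
Each `mᵢ` is the positive root of `ψ m² − 2γᵢ m − 1 = 0`, so with `S = m₁² + m₂²` we get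
`m₁γ₁ + m₂γ₂ + 1 = ψS/2`. Hence `η < 1` amounts to `ψS/2 < √((ψ + γ₁² + γ₂²) S)`, i.e. to
`ψ²mᵢ² < 2ψ + 4γᵢ²`, which is the strict form of `(γ + s)² ≤ 2(γ² + s²)` for
`s = √(ψ + γ²) ≠ γ`.
-/

open Real

/-- The paper's `mᵢ`, as a function of `ψ` and `γ = γᵢ`. -/
noncomputable def ghRoot (ψ γ : ℝ) : ℝ := (γ + √(ψ + γ ^ 2)) / ψ

section ghRoot

variable {ψ : ℝ} (γ : ℝ)

lemma abs_lt_sqrt_add_sq (hψ : 0 < ψ) : |γ| < √(ψ + γ ^ 2) :=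
  lt_sqrt_of_sq_lt (by rw [sq_abs]; linarith)

lemma ghRoot_pos (hψ : 0 < ψ) : 0 < ghRoot ψ γ := by
  have hnum : 0 < γ + √(ψ + γ ^ 2) := by
    linarith [abs_lt_sqrt_add_sq γ hψ, neg_abs_le γ]
  exact div_pos hnum hψ

lemma mul_ghRoot (hψ : 0 < ψ) : ψ * ghRoot ψ γ = γ + √(ψ + γ ^ 2) :=
  mul_div_cancel₀ _ hψ.ne'

lemma ghRoot_quadratic (hψ : 0 < ψ) : ψ * ghRoot ψ γ ^ 2 = 2 * ghRoot ψ γ * γ + 1 := by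
  have hm := mul_ghRoot γ hψ
  have hs : √(ψ + γ ^ 2) ^ 2 = ψ + γ ^ 2 := sq_sqrt (by positivity)
  refine mul_left_cancel₀ hψ.ne' ?_
  linear_combination (ψ * ghRoot ψ γ - γ + √(ψ + γ ^ 2)) * hm + hs

lemma sq_mul_ghRoot_lt (hψ : 0 < ψ) : ψ ^ 2 * ghRoot ψ γ ^ 2 < 2 * ψ + 4 * γ ^ 2 := by
  have hm := mul_ghRoot γ hψ
  have hs : √(ψ + γ ^ 2) ^ 2 = ψ + γ ^ 2 := sq_sqrt (by positivity)
  have hgap : 0 < (√(ψ + γ ^ 2) - γ) ^ 2 :=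
    pow_pos (sub_pos.2 ((le_abs_self γ).trans_lt (abs_lt_sqrt_add_sq γ hψ))) 2
  calc ψ ^ 2 * ghRoot ψ γ ^ 2 = (γ + √(ψ + γ ^ 2)) ^ 2 := by rw [← hm]; ring
    _ < 2 * ψ + 4 * γ ^ 2 := by nlinarith

end ghRoot

lemma one_lt_sqrt_mul_sub {ψ A S c : ℝ} (hc : ψ * S = 2 * c + 2) (hA : ψ ^ 2 * S < 4 * A)
    (hS : 0 < S) : 1 < √(A * S) - c := by
  have hsq : (c + 1) ^ 2 < A * S := by
    have hsq' : 4 * (c + 1) ^ 2 = ψ ^ 2 * S * S := by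
      linear_combination (-(ψ * S + 2 * c + 2)) * hc
    nlinarith [mul_lt_mul_of_pos_right hA hS]
  linarith [lt_sqrt_of_sq_lt hsq]

/-- For `ρ = 0`, the GH residual tail dependence coefficient
`η = 1/(√((ψ+γ₁²+γ₂²)(m₁²+m₂²)) − m₁γ₁ − m₂γ₂)` satisfies `0 < η < 1`. -/
theorem gh_eta_rho_zero_mem_Ioo (ψ γ₁ γ₂ : ℝ) (hψ : 0 < ψ) :
    let m₁ := (γ₁ + Real.sqrt (ψ + γ₁ ^ 2)) / ψ
    let m₂ := (γ₂ + Real.sqrt (ψ + γ₂ ^ 2)) / ψ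
    0 < 1 / (Real.sqrt ((ψ + γ₁ ^ 2 + γ₂ ^ 2) * (m₁ ^ 2 + m₂ ^ 2))
          - m₁ * γ₁ - m₂ * γ₂) ∧
    1 / (Real.sqrt ((ψ + γ₁ ^ 2 + γ₂ ^ 2) * (m₁ ^ 2 + m₂ ^ 2))
          - m₁ * γ₁ - m₂ * γ₂) < 1 := by
  intro m₁ m₂
  have hD : 1 < √((ψ + γ₁ ^ 2 + γ₂ ^ 2) * (ghRoot ψ γ₁ ^ 2 + ghRoot ψ γ₂ ^ 2))
      - ghRoot ψ γ₁ * γ₁ - ghRoot ψ γ₂ * γ₂ := by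
    rw [sub_sub]
    refine one_lt_sqrt_mul_sub (ψ := ψ) ?_ ?_ (by positivity [ghRoot_pos γ₁ hψ])
    · linear_combination ghRoot_quadratic γ₁ hψ + ghRoot_quadratic γ₂ hψ
    · linarith [sq_mul_ghRoot_lt γ₁ hψ, sq_mul_ghRoot_lt γ₂ hψ]
  exact ⟨one_div_pos.2 (zero_lt_one.trans hD), (div_lt_one (zero_lt_one.trans hD)).2 hD⟩
end

section
/- Let ψ > 0, ρ ∈ (-1,1), γ₁, γ₂ ∈ ℝ, h > 0, and let q = (u₁*, u₂*) with uᵢ* = h(γᵢ + √(γᵢ²+ψ))/ψ. Then q does not belong to the set D = {u ∈ ℝ² : (ψ+γ₂²)u₁² + (ψ+γ₁²)u₂² − 2(ρψ+γ₁γ₂)u₁u₂ − 2h{(γ₁−ργ₂)u₁ + (γ₂−ργ₁)u₂} ≤ h²(1−ρ²)}. -/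
lemma gh_aux (ψ ρ γ₁ γ₂ h s₁ s₂ : ℝ) (hψ : 0 < ψ) (hρ1 : -1 < ρ) (hρ2 : ρ < 1)
    (hh : 0 < h) (h1 : s₁ ^ 2 = γ₁ ^ 2 + ψ) (h2 : s₂ ^ 2 = γ₂ ^ 2 + ψ)
    (h3 : γ₁ * γ₂ + ψ ≤ s₁ * s₂) :
    h ^ 2 * (1 - ρ ^ 2) <
      (ψ + γ₂ ^ 2) * (h * (γ₁ + s₁) / ψ) ^ 2 + (ψ + γ₁ ^ 2) * (h * (γ₂ + s₂) / ψ) ^ 2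
        - 2 * (ρ * ψ + γ₁ * γ₂) * (h * (γ₁ + s₁) / ψ) * (h * (γ₂ + s₂) / ψ)
        - 2 * h * ((γ₁ - ρ * γ₂) * (h * (γ₁ + s₁) / ψ) + (γ₂ - ρ * γ₁) * (h * (γ₂ + s₂) / ψ)) := by
  have hψ' : ψ ≠ 0 := ne_of_gt hψ
  have key : ((ψ + γ₂ ^ 2) * (h * (γ₁ + s₁)) ^ 2 + (ψ + γ₁ ^ 2) * (h * (γ₂ + s₂)) ^ 2
      - 2 * (ρ * ψ + γ₁ * γ₂) * (h * (γ₁ + s₁)) * (h * (γ₂ + s₂))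
      - 2 * h * ψ * ((γ₁ - ρ * γ₂) * (h * (γ₁ + s₁)) + (γ₂ - ρ * γ₁) * (h * (γ₂ + s₂))))
      - ψ ^ 2 * (h ^ 2 * (1 - ρ ^ 2)) = h ^ 2 * (s₁ * s₂ - γ₁ * γ₂ - ρ * ψ) ^ 2 := by
    linear_combination (h ^ 2 * ((ψ + γ₂ ^ 2) - s₂ ^ 2)) * h1
  have hpos : 0 < s₁ * s₂ - γ₁ * γ₂ - ρ * ψ := by nlinarith
  rw [← sub_pos]
  have expand : (ψ + γ₂ ^ 2) * (h * (γ₁ + s₁) / ψ) ^ 2 + (ψ + γ₁ ^ 2) * (h * (γ₂ + s₂) / ψ) ^ 2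
      - 2 * (ρ * ψ + γ₁ * γ₂) * (h * (γ₁ + s₁) / ψ) * (h * (γ₂ + s₂) / ψ)
      - 2 * h * ((γ₁ - ρ * γ₂) * (h * (γ₁ + s₁) / ψ) + (γ₂ - ρ * γ₁) * (h * (γ₂ + s₂) / ψ))
      - h ^ 2 * (1 - ρ ^ 2)
      = (((ψ + γ₂ ^ 2) * (h * (γ₁ + s₁)) ^ 2 + (ψ + γ₁ ^ 2) * (h * (γ₂ + s₂)) ^ 2
      - 2 * (ρ * ψ + γ₁ * γ₂) * (h * (γ₁ + s₁)) * (h * (γ₂ + s₂))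
      - 2 * h * ψ * ((γ₁ - ρ * γ₂) * (h * (γ₁ + s₁)) + (γ₂ - ρ * γ₁) * (h * (γ₂ + s₂))))
      - ψ ^ 2 * (h ^ 2 * (1 - ρ ^ 2))) / ψ ^ 2 := by
    field_simp
  rw [expand, key]
  positivity

/-- The coordinatewise supremum `q = (u₁*, u₂*)` of the GH limit set does not
belong to the set `D`. -/
theorem gh_supremum_not_mem (ψ ρ γ₁ γ₂ h : ℝ) (hψ : 0 < ψ)
    (hρ : ρ ∈ Set.Ioo (-1 : ℝ) 1) (hh : 0 < h) :
    let u₁ := h * (γ₁ + Real.sqrt (γ₁ ^ 2 + ψ)) / ψ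
    let u₂ := h * (γ₂ + Real.sqrt (γ₂ ^ 2 + ψ)) / ψ
    ((u₁, u₂) : ℝ × ℝ) ∉
      {u : ℝ × ℝ |
        (ψ + γ₂ ^ 2) * u.1 ^ 2 + (ψ + γ₁ ^ 2) * u.2 ^ 2
          - 2 * (ρ * ψ + γ₁ * γ₂) * u.1 * u.2
          - 2 * h * ((γ₁ - ρ * γ₂) * u.1 + (γ₂ - ρ * γ₁) * u.2)
          ≤ h ^ 2 * (1 - ρ ^ 2)} := by
  intro u₁ u₂
  simp only [Set.mem_setOf_eq, not_le]
  set s₁ := Real.sqrt (γ₁ ^ 2 + ψ) with hs₁def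
  set s₂ := Real.sqrt (γ₂ ^ 2 + ψ) with hs₂def
  have hn1 : (0:ℝ) ≤ γ₁ ^ 2 + ψ := by positivity
  have hn2 : (0:ℝ) ≤ γ₂ ^ 2 + ψ := by positivity
  have h1 : s₁ ^ 2 = γ₁ ^ 2 + ψ := Real.sq_sqrt hn1
  have h2 : s₂ ^ 2 = γ₂ ^ 2 + ψ := Real.sq_sqrt hn2
  have hs1n : 0 ≤ s₁ := Real.sqrt_nonneg _
  have hs2n : 0 ≤ s₂ := Real.sqrt_nonneg _
  have h3 : γ₁ * γ₂ + ψ ≤ s₁ * s₂ := by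
    nlinarith [sq_nonneg (s₁ * s₂ - γ₁ * γ₂ - ψ), sq_nonneg (γ₁ - γ₂), sq_nonneg (s₁ * s₂),
      mul_nonneg hs1n hs2n, sq_nonneg (γ₁ * s₂ - γ₂ * s₁), sq_nonneg (γ₁ * s₂ + γ₂ * s₁)]
  exact gh_aux ψ ρ γ₁ γ₂ h s₁ s₂ hψ hρ.1 hρ.2 hh h1 h2 h3
end
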